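/- The roots of the Legendre polynomial ψ_n are real, simple, and all lie in the open interval (−1,1). -/
import Mathlib


open Polynomial

/-- Legendre polynomials as real polynomials, via the three-term recurrence. -/
noncomputable def legP : ℕ → Polynomial ℝ
  | 0 => 1
  | 1 => X
  | (n + 2) =>
      C ((2 * (n + 1 : ℝ) + 1) / (n + 2 : ℝ)) * X * legP (n + 1) -
        C ((n + 1 : ℝ) / (n + 2 : ℝ)) * legP n

lemma legP_zero : legP 0 = 1 := rfl
lemma legP_one : legP 1 = X := rfl
lemma legP_def (n : ℕ) : legP (n+2) = C ((2 * (n + 1 : ℝ) + 1) / (n + 2 : ℝ)) * X * legP (n + 1) -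
        C ((n + 1 : ℝ) / (n + 2 : ℝ)) * legP n := rfl

lemma legP_deg : ∀ n, (legP n).natDegree = n ∧ 0 < (legP n).leadingCoeff := by
  intro n
  induction n using Nat.strong_induction_on with
  | _ n ih =>
    match n with
    | 0 => simp [legP]
    | 1 => simp [legP]
    | (m+2) =>
      obtain ⟨hq, hq'⟩ := ih (m+1) (by omega)
      obtain ⟨hr, hr'⟩ := ih m (by omega)
      have ha : (0:ℝ) < (2 * (m + 1 : ℝ) + 1) / (m + 2 : ℝ) := by positivity
      set a : ℝ := (2 * (m + 1 : ℝ) + 1) / (m + 2 : ℝ) with hadef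
      set b : ℝ := (m + 1 : ℝ) / (m + 2 : ℝ) with hbdef
      have hqne : legP (m+1) ≠ 0 := fun h => by simp [h] at hq'
      have h1 : (C a * X * legP (m+1)).natDegree = m + 2 := by
        rw [mul_assoc, natDegree_C_mul ha.ne', natDegree_X_mul hqne, hq]
      have h2 : (C b * legP m).natDegree < m + 2 := by
        calc (C b * legP m).natDegree ≤ (C b).natDegree + (legP m).natDegree :=
              natDegree_mul_le
          _ < m + 2 := by simp [hr]
      have hlead : (C a * X * legP (m+1)).leadingCoeff = a * (legP (m+1)).leadingCoeff := by
        rw [mul_assoc, leadingCoeff_mul, leadingCoeff_mul, leadingCoeff_C, leadingCoeff_X, one_mul]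
      have hdegsub : (legP (m+2)).natDegree = m + 2 := by
        show (C a * X * legP (m+1) - C b * legP m).natDegree = m + 2
        rw [natDegree_sub_eq_left_of_natDegree_lt (h1 ▸ h2), h1]
      refine ⟨hdegsub, ?_⟩
      have hddlt : (C b * legP m).degree < (C a * X * legP (m+1)).degree := by
        have hne : C a * X * legP (m+1) ≠ 0 := by
          intro h
          rw [h] at h1; simp at h1
        rw [degree_eq_natDegree hne, h1]
        calc (C b * legP m).degree ≤ (C b * legP m).natDegree := degree_le_natDegree
          _ < ((m:ℕ) + 2 : ℕ) := by exact_mod_cast h2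
      have : (legP (m+2)).leadingCoeff = a * (legP (m+1)).leadingCoeff := by
        show (C a * X * legP (m+1) - C b * legP m).leadingCoeff = _
        rw [leadingCoeff_sub_of_degree_lt hddlt, hlead]
      rw [this]
      exact mul_pos ha hq'

lemma legP_ne (n : ℕ) : legP n ≠ 0 := fun h => by
  have := (legP_deg n).2; rw [h] at this; simp at this

lemma legP_eval_one : ∀ n, (legP n).eval 1 = 1 := by
  intro n
  induction n using Nat.strong_induction_on with
  | _ n ih =>
    match n with
    | 0 => simp [legP]
    | 1 => simp [legP]
    | (m+2) =>
      have h2 : ((m:ℝ) + 2) ≠ 0 := by positivity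
      simp only [legP, eval_sub, eval_mul, eval_C, eval_X, ih (m+1) (by omega), ih m (by omega)]
      field_simp
      ring

lemma legP_eval_neg_one : ∀ n, (legP n).eval (-1) = (-1)^n := by
  intro n
  induction n using Nat.strong_induction_on with
  | _ n ih =>
    match n with
    | 0 => simp [legP]
    | 1 => simp [legP]
    | (m+2) =>
      have h2 : ((m:ℝ) + 2) ≠ 0 := by positivity
      simp only [legP, eval_sub, eval_mul, eval_C, eval_X, ih (m+1) (by omega), ih m (by omega)]
      rw [pow_succ, pow_succ]
      field_simp
      ring


lemma chain_lt {f : ℕ → ℝ} {m : ℕ} (h : ∀ i, i + 1 ≤ m → f i < f (i+1)) :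
    ∀ i j, i < j → j ≤ m → f i < f j := by
  intro i j hij hjm
  induction j with
  | zero => omega
  | succ k ihk =>
    rcases Nat.lt_or_ge i k with hik | hik
    · exact (ihk hik (by omega)).trans (h k (by omega))
    · have : i = k := by omega
      subst this; exact h i (by omega)

lemma ivt_zero {p : Polynomial ℝ} {a b : ℝ} (hab : a < b) (h : p.eval a * p.eval b < 0) :
    ∃ c, c ∈ Set.Ioo a b ∧ p.eval c = 0 := by
  have hc : ContinuousOn (fun x => p.eval x) (Set.Icc a b) := (p.continuous).continuousOn
  rcases mul_neg_iff.mp h with ⟨ha, hb⟩ | ⟨ha, hb⟩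
  · obtain ⟨c, hc1, hc2⟩ := intermediate_value_Ioo' hab.le hc (Set.mem_Ioo.mpr ⟨hb, ha⟩)
    exact ⟨c, hc1, hc2⟩
  · obtain ⟨c, hc1, hc2⟩ := intermediate_value_Ioo hab.le hc (Set.mem_Ioo.mpr ⟨ha, hb⟩)
    exact ⟨c, hc1, hc2⟩

lemma sign_prod {k m : ℕ} (x : ℕ → ℝ) (t : ℝ) (hm : m ≤ k)
    (h1 : ∀ j < m, x j < t) (h2 : ∀ j, m ≤ j → j < k → t < x j) :
    0 < (-1:ℝ)^(k - m) * ∏ j ∈ Finset.range k, (t - x j) := by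
  have hsplit : (∏ j ∈ Finset.Ico 0 m, (t - x j)) * ∏ j ∈ Finset.Ico m k, (t - x j)
      = ∏ j ∈ Finset.Ico 0 k, (t - x j) :=
    Finset.prod_Ico_consecutive _ (Nat.zero_le m) hm
  have hp1 : 0 < ∏ j ∈ Finset.Ico 0 m, (t - x j) :=
    Finset.prod_pos (fun j hj => by
      have := h1 j (Finset.mem_Ico.mp hj).2; linarith)
  have hp2 : (∏ j ∈ Finset.Ico m k, (t - x j))
      = (-1:ℝ)^(k - m) * ∏ j ∈ Finset.Ico m k, (x j - t) := by
    have hcard : (Finset.Ico m k).card = k - m := Nat.card_Ico m k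
    rw [← hcard, ← Finset.prod_const, ← Finset.prod_mul_distrib]
    apply Finset.prod_congr rfl
    intro j _; ring
  have hp2' : 0 < ∏ j ∈ Finset.Ico m k, (x j - t) :=
    Finset.prod_pos (fun j hj => by
      have := h2 j (Finset.mem_Ico.mp hj).1 (Finset.mem_Ico.mp hj).2; linarith)
  have hrange : (Finset.range k) = Finset.Ico 0 k := by rw [Finset.range_eq_Ico]
  rw [hrange, ← hsplit, hp2]
  have hsq : ((-1:ℝ)^(k-m)) * ((-1:ℝ)^(k-m)) = 1 := by
    rw [← pow_add]
    exact Even.neg_one_pow ⟨k - m, rfl⟩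
  calc (0:ℝ) < ((-1:ℝ)^(k-m) * (-1:ℝ)^(k-m)) * ((∏ j ∈ Finset.Ico 0 m, (t - x j)) * ∏ j ∈ Finset.Ico m k, (x j - t)) := by
        rw [hsq, one_mul]; exact mul_pos hp1 hp2'
    _ = (-1:ℝ)^(k-m) * ((∏ j ∈ Finset.Ico 0 m, (t - x j)) * ((-1:ℝ)^(k-m) * ∏ j ∈ Finset.Ico m k, (x j - t))) := by ring

lemma factor_of_roots (p : Polynomial ℝ) (k : ℕ) (hdeg : p.natDegree = k) (hp : p ≠ 0)
    (z : ℕ → ℝ) (hmono : ∀ i j, i < j → j < k → z i < z j)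
    (hroot : ∀ i < k, p.eval (z i) = 0) :
    p.roots = (Finset.range k).val.map z ∧
    p = C p.leadingCoeff * ∏ i ∈ Finset.range k, (X - C (z i)) := by
  have hnd : ((Finset.range k).val.map z).Nodup := by
    refine Multiset.Nodup.map_on ?_ (Finset.range k).nodup
    intro i hi j hj hij
    by_contra hne
    rcases Nat.lt_or_ge i j with h | h
    · exact absurd hij (ne_of_lt (hmono i j h (Finset.mem_range.mp hj)))
    · have : j < i := by omega
      exact absurd hij.symm (ne_of_lt (hmono j i this (Finset.mem_range.mp hi)))
  have hle : (Finset.range k).val.map z ≤ p.roots := by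
    rw [Multiset.le_iff_subset hnd]
    intro a ha
    obtain ⟨i, hi, rfl⟩ := Multiset.mem_map.mp ha
    rw [mem_roots hp]
    exact hroot i (Finset.mem_range.mp hi)
  have hcard : Multiset.card p.roots ≤ Multiset.card ((Finset.range k).val.map z) := by
    rw [Multiset.card_map]
    simpa [hdeg] using p.card_roots' 
  have heq : p.roots = (Finset.range k).val.map z :=
    (Multiset.eq_of_le_of_card_le hle hcard).symm
  refine ⟨heq, ?_⟩
  have hfull : Multiset.card p.roots = p.natDegree := by
    rw [heq, Multiset.card_map, hdeg]; simp
  have h := C_leadingCoeff_mul_prod_multiset_X_sub_C (p := p) hfull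
  rw [heq, Multiset.map_map] at h
  have hprod : (∏ i ∈ Finset.range k, (X - C (z i)))
      = (Multiset.map ((fun a => X - C a) ∘ z) (Finset.range k).val).prod := rfl
  rw [hprod]
  exact h.symm

def LegInv (n : ℕ) : Prop := ∃ x y : ℕ → ℝ,
  (∀ i j, i < j → j < n → x i < x j) ∧
  (∀ i j, i < j → j < n+1 → y i < y j) ∧
  (∀ i < n, x i ∈ Set.Ioo (-1:ℝ) 1) ∧
  (∀ i < n+1, y i ∈ Set.Ioo (-1:ℝ) 1) ∧
  legP n = C (legP n).leadingCoeff * ∏ i ∈ Finset.range n, (X - C (x i)) ∧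
  legP (n+1) = C (legP (n+1)).leadingCoeff * ∏ i ∈ Finset.range (n+1), (X - C (y i)) ∧
  (∀ i < n, y i < x i ∧ x i < y (i+1))

lemma leginv_zero : LegInv 0 := by
  refine ⟨fun _ => 0, fun _ => 0, ?_, ?_, ?_, ?_, ?_, ?_, ?_⟩
  · intro i j _ hj; omega
  · intro i j hij hj; omega
  · intro i hi; omega
  · intro i _; exact ⟨by norm_num, by norm_num⟩
  · simp [legP_zero]
  · simp [legP_one]
  · intro i hi; omega

lemma leginv_step (n : ℕ) (h : LegInv n) : LegInv (n+1) := by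
  obtain ⟨x, y, hxm, hym, hxI, hyI, hxf, hyf, hint⟩ := h
  have hb : (0:ℝ) < (n + 1 : ℝ) / (n + 2 : ℝ) := by positivity
  have hc : 0 < (legP n).leadingCoeff := (legP_deg n).2
  set b : ℝ := (n + 1 : ℝ) / (n + 2 : ℝ) with hbdef
  set c : ℝ := (legP n).leadingCoeff with hcdef
  -- evaluation of legP (n+2) at a root of legP (n+1)
  have hyroot : ∀ j ≤ n, (legP (n+1)).eval (y j) = 0 := by
    intro j hj
    rw [hyf]
    simp only [eval_mul, eval_C, eval_prod, eval_sub, eval_X]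
    rw [Finset.prod_eq_zero (Finset.mem_range.mpr (by omega : j < n+1)) (by ring)]
    ring
  have hev : ∀ j ≤ n, (legP (n+2)).eval (y j)
      = -(b * (c * ∏ k ∈ Finset.range n, (y j - x k))) := by
    intro j hj
    rw [legP_def]
    simp only [eval_sub, eval_mul, eval_C, eval_X, hyroot j hj]
    rw [show ∀ t:ℝ, (legP n).eval t = c * ∏ k ∈ Finset.range n, (t - x k) from ?_]
    · ring
    · intro t
      conv_lhs => rw [hxf]
      simp [eval_prod]
  -- the extended node sequence
  set e : ℕ → ℝ := fun i => if i = 0 then (-1:ℝ) else if i ≤ n+1 then y (i-1) else 1 with hedef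
  have he0 : e 0 = -1 := by simp [hedef]
  have heS : ∀ j ≤ n, e (j+1) = y j := by intro j hj; simp [hedef]; omega
  have heT : e (n+2) = 1 := by simp [hedef]
  -- sign alternation of legP (n+2) at the nodes e 0, ..., e (n+2)
  have hsign : ∀ i ≤ n+2, 0 < (-1:ℝ)^(n+2-i) * (legP (n+2)).eval (e i) := by
    intro i hi
    rcases i with _ | j
    · rw [he0, legP_eval_neg_one (n+2), Nat.sub_zero]
      have : (-1:ℝ)^(n+2) ≠ 0 := by
        intro h; have := pow_eq_zero_iff (n := n+2) (by omega) |>.mp h; norm_num at this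
      exact mul_self_pos.mpr this
    · rcases Nat.lt_or_ge j (n+1) with hjcase | hjcase
      swap
      · have hj' : j = n+1 := by omega
        rw [hj', heT, legP_eval_one (n+2)]
        simp
      have hjn : j ≤ n := by omega
      rw [heS j hjn, hev j hjn]
      set P : ℝ := ∏ k ∈ Finset.range n, (y j - x k) with hPdef
      have hQ : 0 < (-1:ℝ)^(n-j) * P := by
        apply sign_prod x (y j) hjn
        · intro k hk
          have h1 : x k < y (k+1) := (hint k (by omega)).2
          rcases Nat.lt_or_ge (k+1) j with h2 | h2
          · exact h1.trans (hym (k+1) j h2 (by omega))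
          · have : k + 1 = j := by omega
            rw [this] at h1; exact h1
        · intro k hk1 hk2
          have h1 : y k < x k := (hint k hk2).1
          rcases Nat.lt_or_ge j k with h2 | h2
          · exact (hym j k h2 (by omega)).trans h1
          · have : j = k := by omega
            rw [this]; exact h1
      have hpow : (-1:ℝ)^(n+2-(j+1)) = -(-1:ℝ)^(n-j) := by
        rw [show n+2-(j+1) = (n-j)+1 from by omega, pow_succ]; ring
      rw [hpow]
      calc (0:ℝ) < b * c * ((-1:ℝ)^(n-j) * P) := by positivity
        _ = -(-1:ℝ)^(n-j) * -(b * (c * P)) := by ring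
  have hsignT : 0 < (-1:ℝ)^(n+2-(n+2)) * (legP (n+2)).eval (e (n+2)) := by
    rw [heT, legP_eval_one (n+2)]; simp
  -- adjacent nodes increase
  have headj : ∀ i, i + 1 ≤ n+2 → e i < e (i+1) := by
    intro i hi
    rcases i with _ | j
    · rw [he0, heS 0 (by omega)]
      exact (hyI 0 (by omega)).1
    · rw [heS j (by omega)]
      rcases Nat.lt_or_ge (j+1) (n+1) with h2 | h2
      · rw [heS (j+1) (by omega)]
        exact hym j (j+1) (by omega) (by omega)
      · have hj : j = n := by omega
        rw [hj, heT]
        exact (hyI n (by omega)).2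
  -- roots of legP (n+2) by IVT in each interval
  have hivt : ∀ i, ∃ r, i < n+2 → r ∈ Set.Ioo (e i) (e (i+1)) ∧ (legP (n+2)).eval r = 0 := by
    intro i
    rcases Nat.lt_or_ge i (n+2) with hi | hi
    · have h1 := hsign i (by omega)
      have h2 := hsign (i+1) (by omega)
      set u : ℝ := (-1:ℝ)^(n+2-(i+1)) with hudef
      have hu : u * u = 1 := by
        rw [hudef, ← pow_add]
        exact Even.neg_one_pow ⟨n+2-(i+1), rfl⟩
      have hpow : (-1:ℝ)^(n+2-i) = -u := by
        rw [hudef, show n+2-i = (n+2-(i+1))+1 from by omega, pow_succ]; ring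
      rw [hpow] at h1
      set A := (legP (n+2)).eval (e i)
      set B := (legP (n+2)).eval (e (i+1))
      have hAB : A * B < 0 := by
        have hm := mul_pos h1 h2
        have h3 : (-u*A)*(u*B) = -((u*u)*(A*B)) := by ring
        rw [hu, one_mul] at h3
        linarith [hm, h3.symm ▸ hm]
      obtain ⟨r, hr1, hr2⟩ := ivt_zero (headj i hi) hAB
      exact ⟨r, fun _ => ⟨hr1, hr2⟩⟩
    · exact ⟨0, fun h => absurd h (by omega)⟩
  choose z hz using hivt
  have hzroot : ∀ i < n+2, (legP (n+2)).eval (z i) = 0 := fun i hi => (hz i hi).2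
  have hzlo : ∀ i < n+2, e i < z i := fun i hi => (hz i hi).1.1
  have hzhi : ∀ i < n+2, z i < e (i+1) := fun i hi => (hz i hi).1.2
  have hemono := chain_lt (f := e) (m := n+2) headj
  have hzmono : ∀ i j, i < j → j < n+2 → z i < z j := by
    intro i j hij hj
    have h1 : z i < e (i+1) := hzhi i (by omega)
    have h2 : e j < z j := hzlo j hj
    rcases Nat.lt_or_ge (i+1) j with h3 | h3
    · exact h1.trans ((hemono (i+1) j h3 (by omega)).trans h2)
    · have h4 : i + 1 = j := by omega
      rw [h4] at h1; exact h1.trans h2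
  have hzI : ∀ i < n+2, z i ∈ Set.Ioo (-1:ℝ) 1 := by
    intro i hi
    constructor
    · rcases Nat.eq_zero_or_pos i with h | h
      · subst h; rw [← he0]; exact hzlo 0 (by omega)
      · calc (-1:ℝ) = e 0 := he0.symm
          _ < e i := hemono 0 i h (by omega)
          _ < z i := hzlo i hi
    · rcases Nat.lt_or_ge (i+1) (n+2) with h | h
      · calc z i < e (i+1) := hzhi i hi
          _ < e (n+2) := hemono (i+1) (n+2) h (by omega)
          _ = 1 := heT
      · have h4 : i + 1 = n+2 := by omega
        calc z i < e (i+1) := hzhi i hi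
          _ = 1 := by rw [h4, heT]
  obtain ⟨hroots2, hfact2⟩ := factor_of_roots (legP (n+2)) (n+2) (legP_deg (n+2)).1
    (legP_ne (n+2)) z hzmono hzroot
  refine ⟨y, z, ?_, ?_, ?_, ?_, hyf, hfact2, ?_⟩
  · intro i j hij hj; exact hym i j hij (by omega)
  · intro i j hij hj; exact hzmono i j hij (by omega)
  · intro i hi; exact hyI i (by omega)
  · intro i hi; exact hzI i (by omega)
  · intro i hi
    constructor
    · have h1 := hzhi i (by omega)
      rwa [heS i (by omega)] at h1
    · have h1 := hzlo (i+1) (by omega)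
      rwa [heS i (by omega)] at h1

lemma leginv_all (n : ℕ) : LegInv n := by
  induction n with
  | zero => exact leginv_zero
  | succ m ih => exact leginv_step m ih

lemma roots_of_factor (c : ℝ) (hc : c ≠ 0) (k : ℕ) (x : ℕ → ℝ) :
    (C c * ∏ i ∈ Finset.range k, (X - C (x i))).roots = (Finset.range k).val.map x := by
  rw [roots_C_mul _ hc]
  have hprod : (∏ i ∈ Finset.range k, (X - C (x i)))
      = (Multiset.map (fun a => X - C a) ((Finset.range k).val.map x)).prod := by
    rw [Multiset.map_map]; rfl
  rw [hprod, roots_multiset_prod_X_sub_C]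

theorem legendre_roots_real_simple_in_Ioo (n : ℕ) :
    Multiset.card (legP n).roots = n ∧
    ∀ x ∈ (legP n).roots, x ∈ Set.Ioo (-1 : ℝ) 1 ∧ (legP n).roots.count x = 1 := by
  obtain ⟨x, y, hxm, hym, hxI, hyI, hxf, hyf, hint⟩ := leginv_all n
  have hc : (legP n).leadingCoeff ≠ 0 := ne_of_gt (legP_deg n).2
  have hroots : (legP n).roots = (Finset.range n).val.map x := by
    conv_lhs => rw [hxf]
    exact roots_of_factor _ hc n x
  have hnd : ((Finset.range n).val.map x).Nodup := by
    refine Multiset.Nodup.map_on ?_ (Finset.range n).nodup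
    intro i hi j hj hij
    by_contra hne
    rcases Nat.lt_or_ge i j with h | h
    · exact absurd hij (ne_of_lt (hxm i j h (Finset.mem_range.mp hj)))
    · have h2 : j < i := by omega
      exact absurd hij.symm (ne_of_lt (hxm j i h2 (Finset.mem_range.mp hi)))
  refine ⟨?_, ?_⟩
  · rw [hroots, Multiset.card_map]; simp
  · intro a ha
    rw [hroots] at ha
    obtain ⟨i, hi, rfl⟩ := Multiset.mem_map.mp ha
    refine ⟨hxI i (Finset.mem_range.mp hi), ?_⟩
    rw [hroots]
    exact Multiset.count_eq_one_of_mem hnd ha
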